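/- arXiv:0804.1344 — 2 statements merged into one kernel-verified Lean document; each statement's English description precedes it below -/
import Mathlib

section
/- In any monoid presented by generators X (a linearly ordered set) with the Chinese relations cba = bca = cab for all c ≥ b ≥ a in X, the additional relations x_i x_j x_i x_k = x_i x_k x_i x_j hold for all i > j > k. -/
/-- In any monoid satisfying the Chinese relations `cba = bca = cab` for all
`c ≥ b ≥ a` among the images of the generators `X`, the additional relations
`x_i x_j x_i x_k = x_i x_k x_i x_j` hold for all `i > j > k`. -/
theorem chinese_extra_relations {X M : Type*} [LinearOrder X] [Monoid M]
    (f : X → M)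
    (hrel : ∀ a b c : X, a ≤ b → b ≤ c →
      f c * f b * f a = f b * f c * f a ∧ f c * f b * f a = f c * f a * f b) :
    ∀ i j k : X, k < j → j < i →
      f i * f j * f i * f k = f i * f k * f i * f j := by
  intro i j k hkj hji
  obtain ⟨h1, h2⟩ := hrel k j i hkj.le hji.le
  obtain ⟨-, h3⟩ := hrel k i i (hkj.le.trans hji.le) le_rfl
  calc f i * f j * f i * f k
      = f i * (f j * f i * f k) := by rw [mul_assoc, mul_assoc, mul_assoc]
    _ = f i * (f i * f j * f k) := by rw [← h1]
    _ = f i * (f i * f k * f j) := by rw [h2]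
    _ = f i * f i * f k * f j := by rw [mul_assoc, mul_assoc, mul_assoc]
    _ = f i * f k * f i * f j := by rw [h3]
end

section
/- Let S ⊆ k⟨X⟩ be a set of monic polynomials and < a monomial well order on X*. If every element f of the two-sided ideal Id(S) satisfies that its leading word f̄ contains the leading word s̄ of some s ∈ S as a subword (i.e., f̄ = a s̄ b for some a,b ∈ X*), then the set Irr(S) = {u ∈ X* : u ≠ a s̄ b for all s ∈ S, a,b ∈ X*} spans k⟨X⟩/Id(S) and is linearly independent modulo Id(S); hence it is a k-linear basis of k⟨X|S⟩. -/
/-- `w` is the leading word of `f`: it occurs in `f` and dominates every word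
occurring in `f`. -/
def IsLead {k X : Type*} [Field k] [LinearOrder (FreeMonoid X)]
    (f : MonoidAlgebra k (FreeMonoid X)) (w : FreeMonoid X) : Prop :=
  w ∈ f.coeff.support ∧ ∀ u ∈ f.coeff.support, u ≤ w

/-- The two-sided ideal `Id(S)` of `k⟨X⟩` generated by `S`, as the span of
all elements `a·s·b` with `a, b` monomials. -/
noncomputable def IdS (k : Type*) {X : Type*} [Field k]
    (S : Set (MonoidAlgebra k (FreeMonoid X))) :
    Submodule k (MonoidAlgebra k (FreeMonoid X)) :=
  Submodule.span k {p | ∃ s ∈ S, ∃ a b : FreeMonoid X,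
    p = (MonoidAlgebra.of k (FreeMonoid X) a) * s * (MonoidAlgebra.of k (FreeMonoid X) b)}

/-- The set `Irr(S)` of words containing no leading word of `S` as a subword. -/
def IrrS {k X : Type*} [Field k] [LinearOrder (FreeMonoid X)]
    (S : Set (MonoidAlgebra k (FreeMonoid X))) : Set (FreeMonoid X) :=
  {u | ∀ s ∈ S, ∀ w a b : FreeMonoid X, IsLead s w → u ≠ a * w * b}

/-! The irreducible words span a complement of `Id(S)` in `k⟨X⟩`. They span modulo `Id(S)` by
well-founded induction on words: a reducible word `a s̄ b` differs from `a s b ∈ Id(S)` by a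
combination of strictly smaller words, because `s` is monic and the order is monomial. They are
independent modulo `Id(S)` because a nonzero element of `Id(S)` has a reducible leading word,
whereas every word occurring in a combination of irreducible words is irreducible. -/

open Submodule

namespace MonoidAlgebra

variable {k M : Type*}

theorem span_range_of_subtype [Semiring k] [MulOneClass M] (s : Set M) :
    span k (Set.range fun u : s => of k M u) = supported k k s := by
  rw [supported_eq_span_single, Set.image_eq_range]
  simp only [of_apply]

theorem linearIndependent_of_subtype [Semiring k] [MulOneClass M] (s : Set M) :
    LinearIndependent k fun u : s => of k M u :=
  (basis M k).linearIndependent.comp _ Subtype.coe_injective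

theorem coeff_of_mul_mul_of [Semiring k] [CancelMonoid M] (f : k[M]) (a b u : M) :
    (of k M a * f * of k M b).coeff (a * u * b) = f.coeff u := by
  simp [coeff_mul_single_mul, coeff_single_mul_mul]

theorem exists_eq_mul_mul_of_mem_support [Semiring k] [Monoid M] (f : k[M]) (a b : M) {u : M}
    (hu : u ∈ (of k M a * f * of k M b).coeff.support) :
    ∃ v ∈ f.coeff.support, u = a * v * b := by
  classical
  simp only [of_apply] at hu
  obtain ⟨c, hc, rfl⟩ := Finset.mem_image.mp (support_coeff_mul_single_subset _ _ _ hu)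
  obtain ⟨v, hv, rfl⟩ := Finset.mem_image.mp (support_coeff_single_mul_subset _ _ _ hc)
  exact ⟨v, hv, rfl⟩

theorem sub_of_mem_supported_Iio [Ring k] [MulOneClass M] [LinearOrder M] {f : k[M]} {w : M}
    (hw : f.coeff w = 1) (hle : ∀ u ∈ f.coeff.support, u ≤ w) :
    f - of k M w ∈ supported k k (Set.Iio w) := by
  rw [mem_supported]
  intro u hu
  have hcoeff : (f - of k M w).coeff u = f.coeff u - (Finsupp.single w 1 : M →₀ k) u := rfl
  rcases eq_or_ne u w with rfl | hne
  · simp [hw] at hu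
  · rw [Finset.mem_coe, Finsupp.mem_support_iff, hcoeff, Finsupp.single_eq_of_ne hne,
      sub_zero] at hu
    exact (hle u (Finsupp.mem_support_iff.mpr hu)).lt_of_ne hne

end MonoidAlgebra

open MonoidAlgebra

section

variable {k X : Type*} [Field k] [LinearOrder (FreeMonoid X)]

theorem IsLead.unique {f : MonoidAlgebra k (FreeMonoid X)} {w w' : FreeMonoid X}
    (h : IsLead f w) (h' : IsLead f w') : w = w' :=
  le_antisymm (h'.2 w h.1) (h.2 w' h'.1)

theorem IsLead.of_mul_mul_of {f : MonoidAlgebra k (FreeMonoid X)} {w a b : FreeMonoid X}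
    (hmono : StrictMono fun u => a * u * b) (h : IsLead f w) :
    IsLead (of k _ a * f * of k _ b) (a * w * b) := by
  refine ⟨?_, fun u hu => ?_⟩
  · rw [Finsupp.mem_support_iff, coeff_of_mul_mul_of]
    exact Finsupp.mem_support_iff.mp h.1
  · obtain ⟨v, hv, rfl⟩ := exists_eq_mul_mul_of_mem_support f a b hu
    exact hmono.monotone (h.2 v hv)

theorem disjoint_supported_irrS_idS {S : Set (MonoidAlgebra k (FreeMonoid X))}
    (hlead : ∀ f ∈ IdS k S, f ≠ 0 →
      ∃ s ∈ S, ∃ w a b : FreeMonoid X, IsLead s w ∧ IsLead f (a * w * b)) :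
    Disjoint (supported k k (IrrS S)) (IdS k S) := by
  refine disjoint_def.mpr fun f hirr hid => by_contra fun hf => ?_
  obtain ⟨s, hs, w, a, b, hw, hfw⟩ := hlead f hid hf
  exact hirr hfw.1 s hs w a b hw rfl

theorem supported_irrS_sup_idS_eq_top (hwf : WellFoundedLT (FreeMonoid X))
    (hmono : ∀ a b : FreeMonoid X, StrictMono fun u => a * u * b)
    {S : Set (MonoidAlgebra k (FreeMonoid X))}
    (hmonic : ∀ s ∈ S, ∃ w : FreeMonoid X, IsLead s w ∧ s.coeff w = 1) :
    supported k k (IrrS S) ⊔ IdS k S = ⊤ := by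
  set N := supported k k (IrrS S) ⊔ IdS k S
  have hword : ∀ w, of k _ w ∈ N := by
    intro w
    induction w using hwf.induction with
    | _ w ih =>
    by_cases hirr : w ∈ IrrS S
    · refine mem_sup_left ?_
      rw [← span_range_of_subtype]
      exact subset_span ⟨⟨w, hirr⟩, rfl⟩
    simp only [IrrS, Set.mem_ofPred_eq, not_forall, not_not] at hirr
    obtain ⟨s, hs, ws, a, b, hws, rfl⟩ := hirr
    obtain ⟨ws', hws', hcoeff⟩ := hmonic s hs
    obtain rfl := hws'.unique hws
    set h := of k _ a * s * of k _ b
    have hh : h ∈ IdS k S := subset_span ⟨s, hs, a, b, rfl⟩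
    have hsmaller : h - of k _ (a * ws' * b) ∈ supported k k (Set.Iio (a * ws' * b)) :=
      sub_of_mem_supported_Iio ((coeff_of_mul_mul_of s a b ws').trans hcoeff)
        ((hws'.of_mul_mul_of (hmono a b)).2)
    have hIio : supported k k (Set.Iio (a * ws' * b)) ≤ N := by
      rw [← span_range_of_subtype, span_le]
      rintro _ ⟨u, rfl⟩
      exact ih u u.2
    rw [← sub_sub_cancel h (of k _ (a * ws' * b))]
    exact N.sub_mem (mem_sup_right hh) (hIio hsmaller)
  rw [eq_top_iff]
  intro f _
  refine span_le.mpr ?_ (mem_span_support_coeff f)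
  rintro _ ⟨u, -, rfl⟩
  exact hword u

end

/-- (ii) ⟹ (iii) in the Composition-Diamond lemma: if every nonzero element
of `Id(S)` has leading word of the form `a s̄ b`, then `Irr(S)` is a linear
basis of `k⟨X | S⟩ = k⟨X⟩/Id(S)`. -/
theorem CD_lemma_ii_implies_iii {k X : Type*} [Field k] [LinearOrder (FreeMonoid X)]
    (hwf : WellFoundedLT (FreeMonoid X))
    (hmono : ∀ u v w₁ w₂ : FreeMonoid X, u < v → w₁ * u * w₂ < w₁ * v * w₂)
    (S : Set (MonoidAlgebra k (FreeMonoid X)))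
    (hmonic : ∀ s ∈ S, ∃ w : FreeMonoid X, IsLead s w ∧ s.coeff w = 1)
    (hlead : ∀ f ∈ IdS k S, f ≠ 0 →
      ∃ s ∈ S, ∃ w a b : FreeMonoid X, IsLead s w ∧ IsLead f (a * w * b)) :
    LinearIndependent k (fun u : IrrS S =>
      Submodule.Quotient.mk (p := IdS k S)
        (MonoidAlgebra.of k (FreeMonoid X) (u : FreeMonoid X))) ∧
    Submodule.span k (Set.range (fun u : IrrS S =>
      Submodule.Quotient.mk (p := IdS k S)
        (MonoidAlgebra.of k (FreeMonoid X) (u : FreeMonoid X)))) = ⊤ := by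
  constructor
  · refine (linearIndependent_of_subtype (k := k) (IrrS S)).map (f := (IdS k S).mkQ) ?_
    rw [span_range_of_subtype, ker_mkQ]
    exact disjoint_supported_irrS_idS hlead
  · change span k (Set.range ((IdS k S).mkQ ∘ fun u : IrrS S => of k _ (u : FreeMonoid X))) = ⊤
    rw [Set.range_comp, ← map_span, span_range_of_subtype, map_mkQ_eq_top,
      sup_comm]
    exact supported_irrS_sup_idS_eq_top hwf (fun a b u v h => hmono u v a b h) hmonic
end
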